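/- Let n ≥ 1 and let A be a real n×n matrix satisfying the cyclic non-increasing condition and Ae > 0 (all row sums strictly positive). Suppose in addition that for every pair of vertices r, s ∈ {1,…,n} there exists a vertex v ∈ {1,…,n} that is reachable by a directed path (possibly of length 0) in the graph 𝒢(A) both from r and from s. Then det A > 0. -/

import Mathlib

open Matrix BigOperators

/-- The cyclic non-increasing condition: each row of `A` weakly decreases
cyclically starting from the diagonal, i.e. `a_{i[j-1]} ≥ a_{ij}` for all
`j ≠ i` (indices in `Fin n`, arithmetic mod `n`). -/
def CyclicNonIncr {n : ℕ} [NeZero n] (A : Matrix (Fin n) (Fin n) ℝ) : Prop :=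
  ∀ i j : Fin n, j ≠ i → A i (j - 1) ≥ A i j

/-- The directed graph `𝒢(A)` has an edge from `i` to `j` iff `a_{i[j-1]} > a_{ij}`. -/
def GraphEdge {n : ℕ} [NeZero n] (A : Matrix (Fin n) (Fin n) ℝ) (i j : Fin n) : Prop :=
  A i (j - 1) > A i j

/-- `i` and `j` are strongly connected in `𝒢(A)`: there are directed paths
(possibly of length 0) from `i` to `j` and from `j` to `i`. -/
def Conn {n : ℕ} [NeZero n] (A : Matrix (Fin n) (Fin n) ℝ) (i j : Fin n) : Prop :=
  Relation.ReflTransGen (GraphEdge A) i j ∧ Relation.ReflTransGen (GraphEdge A) j i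

/-- `C` is a strongly connected component of `𝒢(A)`: an equivalence class of
the strong-connectivity relation. -/
def IsSCC {n : ℕ} [NeZero n] (A : Matrix (Fin n) (Fin n) ℝ) (C : Set (Fin n)) : Prop :=
  ∃ i, C = {j | Conn A i j}

/-- `C` is a closed SCC of `𝒢(A)`: an SCC with no edge leaving it. -/
def IsClosedSCC {n : ℕ} [NeZero n] (A : Matrix (Fin n) (Fin n) ℝ) (C : Set (Fin n)) : Prop :=
  IsSCC A C ∧ ∀ i ∈ C, ∀ j, GraphEdge A i j → j ∈ C

/-- `C` is an open SCC of `𝒢(A)`: an SCC with some edge leaving it. -/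
def IsOpenSCC {n : ℕ} [NeZero n] (A : Matrix (Fin n) (Fin n) ℝ) (C : Set (Fin n)) : Prop :=
  IsSCC A C ∧ ¬ (∀ i ∈ C, ∀ j, GraphEdge A i j → j ∈ C)

/-!
Write `x = Δy + c·e` with `(Δy)_j = y_{j+1} - y_j` and `c` the mean of `x`. Summation by parts
gives `A x = W y + c (A e)`, where `W_{ij} = a_{i,j-1} - a_{ij}` has zero row sums, non-negative
off-diagonal entries (the cyclic condition) and positive entries exactly on the edges of `𝒢(A)`.
If `A x = 0`, the sign of `W y` at a maximum and at a minimum of `y` forces `c = 0`; then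
the set of maxima and the set of minima of `y` are both closed under edges, so the vertex
reachable from a maximum and from a minimum shows that `y` is constant, hence `x = 0`.
So `det A ≠ 0`, and since the hypotheses persist along `t ↦ (1 - t) A + t I`, on which the
cycle `i → i + 1` lies in the graph for `t > 0`, the determinant keeps the sign of `det I = 1`.
-/

open Matrix Finset Relation

structure IsRateMatrix {ι : Type*} [Fintype ι] (W : Matrix ι ι ℝ) : Prop where
  nonneg_of_ne : ∀ i j, i ≠ j → 0 ≤ W i j
  sum_eq_zero : ∀ i, ∑ j, W i j = 0

namespace IsRateMatrix

variable {ι : Type*} [Fintype ι] {W : Matrix ι ι ℝ} {y : ι → ℝ} {i v : ι}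

theorem mulVec_apply (hW : IsRateMatrix W) (y : ι → ℝ) (i : ι) :
    (W *ᵥ y) i = ∑ k, W i k * (y k - y i) := by
  simp only [mul_sub, sum_sub_distrib, ← sum_mul, hW.sum_eq_zero, zero_mul, sub_zero, mulVec,
    dotProduct]

theorem mul_sub_nonpos_of_isMax (hW : IsRateMatrix W) (hi : ∀ k, y k ≤ y i) (k : ι) :
    W i k * (y k - y i) ≤ 0 := by
  rcases eq_or_ne i k with rfl | hik
  · simp
  · exact mul_nonpos_of_nonneg_of_nonpos (hW.nonneg_of_ne i k hik) (sub_nonpos.2 (hi k))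

theorem mulVec_apply_nonpos_of_isMax (hW : IsRateMatrix W) (hi : ∀ k, y k ≤ y i) :
    (W *ᵥ y) i ≤ 0 := by
  rw [hW.mulVec_apply]
  exact sum_nonpos fun k _ => hW.mul_sub_nonpos_of_isMax hi k

theorem mulVec_apply_nonneg_of_isMin (hW : IsRateMatrix W) (hi : ∀ k, y i ≤ y k) :
    0 ≤ (W *ᵥ y) i := by
  have := hW.mulVec_apply_nonpos_of_isMax (y := -y) (i := i) (fun k => neg_le_neg (hi k))
  rwa [mulVec_neg, Pi.neg_apply, neg_nonpos] at this

theorem eq_of_isMax_of_mulVec_apply_eq_zero (hW : IsRateMatrix W) (hi : ∀ k, y k ≤ y i)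
    (h0 : (W *ᵥ y) i = 0) {k : ι} (hk : 0 < W i k) : y k = y i := by
  rw [hW.mulVec_apply] at h0
  have hterm := (sum_eq_zero_iff_of_nonpos fun l _ => hW.mul_sub_nonpos_of_isMax hi l).1 h0 k
    (mem_univ k)
  exact sub_eq_zero.1 ((mul_eq_zero.1 hterm).resolve_left hk.ne')

theorem isMax_of_reflTransGen (hW : IsRateMatrix W) (hy : W *ᵥ y = 0) (hi : ∀ k, y k ≤ y i)
    (hv : ReflTransGen (fun a b => 0 < W a b) i v) : ∀ k, y k ≤ y v := by
  induction hv with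
  | refl => exact hi
  | tail _ hab ih =>
    rw [hW.eq_of_isMax_of_mulVec_apply_eq_zero ih (congrFun hy _) hab]
    exact ih

theorem isMin_of_reflTransGen (hW : IsRateMatrix W) (hy : W *ᵥ y = 0) (hi : ∀ k, y i ≤ y k)
    (hv : ReflTransGen (fun a b => 0 < W a b) i v) : ∀ k, y v ≤ y k := by
  have := hW.isMax_of_reflTransGen (y := -y) (by rw [mulVec_neg, hy, neg_zero])
    (fun k => neg_le_neg (hi k)) hv
  exact fun k => neg_le_neg_iff.1 (this k)

theorem eq_zero_and_const_of_mulVec_add_smul_eq_zero [Nonempty ι] (hW : IsRateMatrix W)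
    (hjoin : ∀ r s, Join (ReflTransGen fun a b => 0 < W a b) r s) {s : ι → ℝ}
    (hs : ∀ i, 0 < s i) {c : ℝ} (h : W *ᵥ y + c • s = 0) :
    c = 0 ∧ ∀ i j, y i = y j := by
  have hWy : ∀ i, (W *ᵥ y) i = -(c * s i) := fun i => by
    simpa [eq_neg_iff_add_eq_zero] using congrFun h i
  obtain ⟨imax, hmax⟩ := Finite.exists_max y
  obtain ⟨imin, hmin⟩ := Finite.exists_min y
  have hmax' := hW.mulVec_apply_nonpos_of_isMax hmax
  have hmin' := hW.mulVec_apply_nonneg_of_isMin hmin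
  rw [hWy, neg_nonpos] at hmax'
  rw [hWy, neg_nonneg] at hmin'
  have hc : c = 0 := le_antisymm (nonpos_of_mul_nonpos_left hmin' (hs imin))
    (nonneg_of_mul_nonneg_left hmax' (hs imax))
  have hy : W *ᵥ y = 0 := funext fun i => by simp [hWy, hc]
  obtain ⟨v, hv₁, hv₂⟩ := hjoin imax imin
  have hconst : ∀ k, y k = y v := fun k => le_antisymm
    (hW.isMax_of_reflTransGen hy hmax hv₁ k) (hW.isMin_of_reflTransGen hy hmin hv₂ k)
  exact ⟨hc, fun i j => by rw [hconst i, hconst j]⟩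

end IsRateMatrix

section CyclicDifferences

variable {n : ℕ} [NeZero n]

def cyclicDiff {ι R : Type*} [Ring R] (A : Matrix ι (Fin n) R) : Matrix ι (Fin n) R :=
  of fun i j => A i (j - 1) - A i j

theorem mulVec_add_one_sub_eq_cyclicDiff_mulVec {ι R : Type*} [Ring R] (A : Matrix ι (Fin n) R)
    (y : Fin n → R) : A *ᵥ (fun j => y (j + 1) - y j) = cyclicDiff A *ᵥ y := by
  ext i
  have hshift : ∑ j, A i j * y (j + 1) = ∑ j, A i (j - 1) * y j :=
    Fintype.sum_equiv (Equiv.addRight 1) _ _ fun j => by simp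
  simp only [mulVec, dotProduct, cyclicDiff, of_apply, mul_sub, sub_mul, sum_sub_distrib, hshift]

theorem exists_add_one_sub_eq_of_sum_eq_zero {R : Type*} [AddCommGroup R] (f : Fin n → R)
    (hf : ∑ j, f j = 0) : ∃ y : Fin n → R, ∀ j, y (j + 1) - y j = f j := by
  obtain ⟨m, rfl⟩ := Nat.exists_eq_add_one_of_ne_zero (NeZero.ne n)
  let g : ℕ → R := fun k => f (Fin.ofNat (m + 1) k)
  have hg : ∀ j : Fin (m + 1), g j = f j := fun j => by simp [g]
  refine ⟨fun j => ∑ k ∈ range j, g k, fun j => ?_⟩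
  dsimp only
  rw [Fin.val_add_one]
  split_ifs with hj
  · subst hj
    have hsum : ∑ k ∈ range (m + 1), g k = 0 := by
      rw [← Fin.sum_univ_eq_sum_range]
      simpa [hg] using hf
    rw [sum_range_succ] at hsum
    simp [← hg, eq_neg_of_add_eq_zero_left hsum]
  · simp [sum_range_succ, hg]

theorem reflTransGen_of_forall_add_one {r : Fin n → Fin n → Prop}
    (h : ∀ i, ReflTransGen r i (i + 1)) (a b : Fin n) : ReflTransGen r a b := by
  have hstep : ∀ d : ℕ, ReflTransGen r a (a + Fin.ofNat n d) := by
    intro d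
    induction d with
    | zero => simpa using ReflTransGen.refl
    | succ d ih =>
      have hsucc : Fin.ofNat n (d + 1) = Fin.ofNat n d + 1 := by
        ext
        simp [Fin.val_add, Fin.ofNat, Nat.add_mod]
      rw [hsucc, ← add_assoc]
      exact ih.trans (h _)
  simpa using hstep (b - a).val

theorem graphEdge_one_add_one {i : Fin n} (hi : i + 1 ≠ i) :
    GraphEdge (1 : Matrix (Fin n) (Fin n) ℝ) i (i + 1) := by
  rw [GraphEdge, add_sub_cancel_right, one_apply_eq, one_apply_ne' hi]
  exact one_pos

end CyclicDifferences

namespace CyclicNonIncr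

variable {n : ℕ} [NeZero n] {A B : Matrix (Fin n) (Fin n) ℝ}

theorem isRateMatrix_cyclicDiff (hA : CyclicNonIncr A) : IsRateMatrix (cyclicDiff A) where
  nonneg_of_ne i j hij := sub_nonneg.2 (hA i j hij.symm)
  sum_eq_zero i := by
    simp only [cyclicDiff, of_apply, sum_sub_distrib]
    exact sub_eq_zero.2 (Fintype.sum_equiv (Equiv.subRight 1) _ _ fun _ => rfl)

theorem det_ne_zero (hA : CyclicNonIncr A) (hrow : ∀ i, 0 < (A *ᵥ 1) i)
    (hconn : ∀ r s, Join (ReflTransGen (GraphEdge A)) r s) : A.det ≠ 0 := by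
  rw [Ne, ← exists_mulVec_eq_zero_iff]
  rintro ⟨x, hx0, hAx⟩
  set c := (∑ j, x j) / n
  obtain ⟨y, hy⟩ := exists_add_one_sub_eq_of_sum_eq_zero (fun j => x j - c) (by
    simp only [sum_sub_distrib, sum_const, card_univ, Fintype.card_fin, nsmul_eq_mul, c]
    rw [mul_div_cancel₀ _ (Nat.cast_ne_zero.2 (NeZero.ne n)), sub_self])
  have hx : x = (fun j => y (j + 1) - y j) + c • 1 := by
    ext j
    simp [hy]
  have hjoin : ∀ r s, Join (ReflTransGen fun a b => 0 < cyclicDiff A a b) r s := fun r s => by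
    obtain ⟨v, hrv, hsv⟩ := hconn r s
    exact ⟨v, ReflTransGen.mono (fun _ _ => sub_pos.2) _ _ hrv,
      ReflTransGen.mono (fun _ _ => sub_pos.2) _ _ hsv⟩
  rw [hx, mulVec_add, mulVec_add_one_sub_eq_cyclicDiff_mulVec, mulVec_smul] at hAx
  obtain ⟨hc, hconst⟩ :=
    hA.isRateMatrix_cyclicDiff.eq_zero_and_const_of_mulVec_add_smul_eq_zero hjoin hrow hAx
  exact hx0 (by rw [hx, hc]; ext j; simp [hconst (j + 1) j])

theorem one : CyclicNonIncr (1 : Matrix (Fin n) (Fin n) ℝ) := fun i j hji => by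
  rw [one_apply_ne' hji, one_apply]
  split_ifs <;> norm_num

theorem smul_add_smul (hA : CyclicNonIncr A) (hB : CyclicNonIncr B) {a b : ℝ} (ha : 0 ≤ a)
    (hb : 0 ≤ b) : CyclicNonIncr (a • A + b • B) := fun i j hji =>
  add_le_add (mul_le_mul_of_nonneg_left (hA i j hji) ha) (mul_le_mul_of_nonneg_left (hB i j hji) hb)

theorem graphEdge_smul_add_smul (hA : CyclicNonIncr A) {a b : ℝ} (ha : 0 ≤ a) (hb : 0 < b)
    {i j : Fin n} (hji : j ≠ i) (hB : GraphEdge B i j) : GraphEdge (a • A + b • B) i j :=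
  add_lt_add_of_le_of_lt (mul_le_mul_of_nonneg_left (hA i j hji) ha) (mul_lt_mul_of_pos_left hB hb)

theorem det_one_sub_smul_add_smul_one_ne_zero (hA : CyclicNonIncr A)
    (hrow : ∀ i, 0 < (A *ᵥ 1) i) {t : ℝ} (ht₀ : 0 < t) (ht₁ : t ≤ 1) :
    ((1 - t) • A + t • (1 : Matrix (Fin n) (Fin n) ℝ)).det ≠ 0 := by
  refine (hA.smul_add_smul .one (sub_nonneg.2 ht₁) ht₀.le).det_ne_zero (fun i => ?_)
    fun r s => ⟨s, reflTransGen_of_forall_add_one (fun i => ?_) r s, .refl⟩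
  · simp only [add_mulVec, smul_mulVec, one_mulVec, Pi.add_apply, Pi.smul_apply, smul_eq_mul,
      Pi.one_apply, mul_one]
    exact add_pos_of_nonneg_of_pos (mul_nonneg (sub_nonneg.2 ht₁) (hrow i).le) ht₀
  · by_cases hi : i + 1 = i
    · rw [hi]
    · exact .single <|
        hA.graphEdge_smul_add_smul (sub_nonneg.2 ht₁) ht₀ hi (graphEdge_one_add_one hi)

end CyclicNonIncr

theorem stmt_17_general (n : ℕ) [NeZero n] (A : Matrix (Fin n) (Fin n) ℝ)
    (hA : CyclicNonIncr A)
    (hrow : ∀ i, 0 < A.mulVec (fun _ => (1 : ℝ)) i)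
    (hconn : ∀ r s : Fin n, ∃ v : Fin n,
      Relation.ReflTransGen (GraphEdge A) r v ∧
      Relation.ReflTransGen (GraphEdge A) s v) :
    0 < A.det := by
  let M : ℝ → Matrix (Fin n) (Fin n) ℝ := fun t => (1 - t) • A + t • 1
  have hM : ∀ t ∈ Set.Icc (0 : ℝ) 1, (M t).det ≠ 0 := by
    rintro t ⟨ht₀, ht₁⟩
    rcases ht₀.eq_or_lt with rfl | ht₀
    · simpa [M] using hA.det_ne_zero hrow hconn
    · exact hA.det_one_sub_smul_add_smul_one_ne_zero hrow ht₀ ht₁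
  have hcont : Continuous fun t => (M t).det := by fun_prop
  by_contra! hdet
  obtain ⟨t, ht, hzero⟩ := intermediate_value_Icc zero_le_one hcont.continuousOn
    ⟨by simpa [M] using hdet, by simp [M]⟩
  exact hM t ht hzero

theorem stmt_17 (n : ℕ) [NeZero n] (hn : 1 ≤ n) (A : Matrix (Fin n) (Fin n) ℝ)
    (hA : CyclicNonIncr A)
    (hrow : ∀ i, 0 < A.mulVec (fun _ => (1 : ℝ)) i)
    (hconn : ∀ r s : Fin n, ∃ v : Fin n,
      Relation.ReflTransGen (GraphEdge A) r v ∧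
      Relation.ReflTransGen (GraphEdge A) s v) :
    0 < A.det :=
  stmt_17_general n A hA hrow hconn
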